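/- Let H be a Hadamard matrix of order n and m an integer with n ≥ m > 1. Then the mean value of det(M)² over all m × m submatrices M of H is strictly greater than m!. Equivalently, the sum of det(M)² over all C(n,m)² submatrices of order m is strictly greater than m! · C(n,m)². -/

import Mathlib

/-!
By the Cauchy–Binet formula, the squared `m × m` minors of `H` lying in a fixed set of `m` rows
sum to `det (H_r H_rᵀ)`, where `H_r` is the `m × n` matrix of those rows. Orthogonality of the
rows gives `H_r H_rᵀ = n • 1`, so every set of rows contributes `n ^ m`, and the total is
`C(n,m) n ^ m`. Finally `m! C(n,m) = n (n-1) ⋯ (n-m+1) < n ^ m` as soon as `m ≥ 2`.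
-/

open Matrix Finset Equiv

section StrictMonoTuples

variable {m : ℕ} {ι : Type*} [LinearOrder ι]

def strictMonoEquivOrderEmbedding : {f : Fin m → ι // StrictMono f} ≃ (Fin m ↪o ι) where
  toFun f := OrderEmbedding.ofStrictMono f.1 f.2
  invFun e := ⟨e, e.strictMono⟩

theorem Fintype.card_strictMono_fin [Fintype ι] :
    Fintype.card {f : Fin m → ι // StrictMono f} = (Fintype.card ι).choose m := by
  rw [← Nat.card_eq_fintype_card, ← Nat.card_eq_fintype_card,
    Nat.card_congr (strictMonoEquivOrderEmbedding.trans Set.powersetCard.ofFinEmbEquiv),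
    Set.powersetCard.card]

theorem Tuple.sort_strictMono_comp_perm {f : Fin m → ι} (hf : StrictMono f) (τ : Perm (Fin m)) :
    Tuple.sort (f ∘ τ) = τ⁻¹ := by
  refine (Tuple.eq_sort_iff.2 ⟨?_, fun i j hij heq => ?_⟩).symm
  · simpa [Function.comp_def] using hf.monotone
  · exact absurd (hf.injective (by simpa using heq)) hij.ne

def strictMonoProdPermEquivInjective :
    {f : Fin m → ι // StrictMono f} × Perm (Fin m) ≃ {p : Fin m → ι // Function.Injective p} where
  toFun x := ⟨x.1.1 ∘ x.2, x.1.2.injective.comp x.2.injective⟩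
  invFun p := (⟨p.1 ∘ Tuple.sort p.1,
    (Tuple.monotone_sort p.1).strictMono_of_injective (p.2.comp (Tuple.sort p.1).injective)⟩,
    (Tuple.sort p.1)⁻¹)
  left_inv := by
    rintro ⟨⟨f, hf⟩, τ⟩
    simp [Tuple.sort_strictMono_comp_perm hf, Function.comp_assoc]
  right_inv p := by ext; simp

end StrictMonoTuples

section CauchyBinet

variable {R : Type*} [CommRing R] {ι : Type*} [Fintype ι]

theorem Matrix.det_mul_eq_sum_prod_mul_det_submatrix {n : Type*} [Fintype n] [DecidableEq n]
    (A : Matrix n ι R) (B : Matrix ι n R) :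
    (A * B).det = ∑ p : n → ι, (∏ i, B (p i) i) * (A.submatrix id p).det := by
  simp only [det_apply', mul_apply, prod_univ_sum, mul_sum, Fintype.piFinset_univ,
    submatrix_apply, id]
  rw [sum_comm]
  refine sum_congr rfl fun p _ => sum_congr rfl fun σ _ => ?_
  rw [prod_mul_distrib]
  ring

variable [LinearOrder ι] {m : ℕ}

theorem Matrix.det_mul_eq_sum_det_submatrix_mul_det_submatrix
    (A : Matrix (Fin m) ι R) (B : Matrix ι (Fin m) R) :
    (A * B).det = ∑ f : {f : Fin m → ι // StrictMono f},
      (A.submatrix id f.1).det * (B.submatrix f.1 id).det := by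
  classical
  calc (A * B).det = ∑ p : Fin m → ι, (∏ i, B (p i) i) * (A.submatrix id p).det :=
        det_mul_eq_sum_prod_mul_det_submatrix A B
    _ = ∑ p : {p : Fin m → ι // Function.Injective p},
          (∏ i, B (p.1 i) i) * (A.submatrix id p.1).det := by
        have h_noninjective_vanish : ∀ p ∈ univ,
            (∏ i, B (p i) i) * (A.submatrix id p).det ≠ 0 → Function.Injective p := by
          intro p _ hp
          by_contra hinj
          obtain ⟨i, j, hij, hne⟩ := Function.not_injective_iff.1 hinj
          exact hp (by rw [det_zero_of_column_eq hne fun k => by simp [hij], mul_zero])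
        rw [← sum_filter_of_ne h_noninjective_vanish,
          sum_subtype (p := Function.Injective) _ (by simp)]
    _ = ∑ x : {f : Fin m → ι // StrictMono f} × Perm (Fin m),
          (∏ i, B (x.1.1 (x.2 i)) i) * (A.submatrix id (x.1.1 ∘ x.2)).det :=
        (Fintype.sum_equiv strictMonoProdPermEquivInjective _ _ fun _ => rfl).symm
    _ = ∑ f : {f : Fin m → ι // StrictMono f}, ∑ τ : Perm (Fin m),
          (A.submatrix id f.1).det * (Perm.sign τ * ∏ i, B (f.1 (τ i)) i) := by
        rw [Fintype.sum_prod_type]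
        refine sum_congr rfl fun f _ => sum_congr rfl fun τ _ => ?_
        change _ * ((A.submatrix id f.1).submatrix id τ).det = _
        rw [det_permute']
        ring
    _ = _ := by simp only [← mul_sum, det_apply', submatrix_apply, id]

end CauchyBinet

section SquaredMinors

variable {R : Type*} [CommRing R] {ι : Type*} [Fintype ι] [LinearOrder ι] {m : ℕ}

theorem Matrix.sum_sq_det_submatrix_eq_det_mul_transpose (A : Matrix (Fin m) ι R) :
    ∑ g : {g : Fin m → ι // StrictMono g}, (A.submatrix id g.1).det ^ 2 = (A * Aᵀ).det := by
  rw [det_mul_eq_sum_det_submatrix_mul_det_submatrix]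
  refine sum_congr rfl fun g _ => ?_
  rw [← transpose_submatrix, det_transpose, sq]

theorem Matrix.sum_sq_det_submatrix_of_mul_transpose_eq_smul_one (H : Matrix ι ι R) (c : R)
    (hH : H * Hᵀ = c • 1) :
    ∑ f : {f : Fin m → ι // StrictMono f}, ∑ g : {g : Fin m → ι // StrictMono g},
      (H.submatrix f.1 g.1).det ^ 2 = (Fintype.card ι).choose m * c ^ m := by
  have h_rows : ∀ f : {f : Fin m → ι // StrictMono f},
      ∑ g : {g : Fin m → ι // StrictMono g}, (H.submatrix f.1 g.1).det ^ 2 = c ^ m := by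
    intro f
    have h_gram : H.submatrix f.1 id * (H.submatrix f.1 id)ᵀ = c • 1 := by
      rw [transpose_submatrix, ← submatrix_mul _ _ _ _ _ Function.bijective_id, hH,
        submatrix_smul, Pi.smul_apply, Pi.smul_apply, submatrix_one _ f.2.injective]
    calc ∑ g : {g : Fin m → ι // StrictMono g}, (H.submatrix f.1 g.1).det ^ 2
        = ∑ g : {g : Fin m → ι // StrictMono g}, ((H.submatrix f.1 id).submatrix id g.1).det ^ 2 :=
          rfl
      _ = c ^ m := by
          rw [sum_sq_det_submatrix_eq_det_mul_transpose, h_gram, det_smul, det_one,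
            Fintype.card_fin, mul_one]
  rw [sum_congr rfl fun f _ => h_rows f, sum_const, card_univ, Fintype.card_strictMono_fin,
    nsmul_eq_mul]

end SquaredMinors

theorem sum_sq_minors_hadamard_gt_factorial_general (n m : ℕ) (hm : 1 < m) (hmn : m ≤ n)
    (H : Matrix (Fin n) (Fin n) ℤ)
    (hH : H * Hᵀ = (n : ℤ) • (1 : Matrix (Fin n) (Fin n) ℤ)) :
    (m.factorial : ℤ) * (n.choose m : ℤ) ^ 2 <
      ∑ f : {f : Fin m → Fin n // StrictMono f},
        ∑ g : {g : Fin m → Fin n // StrictMono g},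
          (H.submatrix f.1 g.1).det ^ 2 := by
  rw [sum_sq_det_submatrix_of_mul_transpose_eq_smul_one H _ hH, Fintype.card_fin]
  have h_desc : m.factorial * n.choose m < n ^ m := by
    rw [← Nat.descFactorial_eq_factorial_mul_choose]
    exact Nat.descFactorial_lt_pow (by omega) hm
  have h_nat : m.factorial * n.choose m ^ 2 < n.choose m * n ^ m := by
    rw [sq, ← mul_assoc, mul_comm]
    exact Nat.mul_lt_mul_of_pos_left h_desc (Nat.choose_pos hmn)
  exact_mod_cast h_nat

/-- For a Hadamard matrix `H` of order `n` and `n ≥ m > 1`, the sum of squared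
minors of order `m` (over all `C(n,m)^2` pairs of strictly monotone index maps
`Fin m → Fin n`) is strictly greater than `m! * C(n,m)^2`; equivalently, the
mean of `det(M)^2` over all such submatrices exceeds `m!`. -/
theorem sum_sq_minors_hadamard_gt_factorial (n m : ℕ) (hm : 1 < m) (hmn : m ≤ n)
    (H : Matrix (Fin n) (Fin n) ℤ) (hH1 : ∀ i j, H i j = 1 ∨ H i j = -1)
    (hH : H * Hᵀ = (n : ℤ) • (1 : Matrix (Fin n) (Fin n) ℤ)) :
    (m.factorial : ℤ) * (n.choose m : ℤ) ^ 2 <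
      ∑ f : {f : Fin m → Fin n // StrictMono f},
        ∑ g : {g : Fin m → Fin n // StrictMono g},
          (H.submatrix f.1 g.1).det ^ 2 :=
  sum_sq_minors_hadamard_gt_factorial_general n m hm hmn H hH
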